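/- The fourth mixed moment of quadrabasic Gaussian operators in the vacuum state is φ(G₁G₂G₃G₄) = ⟨ξ₁,ξ₂⟩⟨ξ₃,ξ₄⟩⟨η₁,η₂⟩⟨η₃,η₄⟩ + qv⟨ξ₁,ξ₃⟩⟨ξ₂,ξ₄⟩⟨η₁,η₃⟩⟨η₂,η₄⟩ + qw⟨ξ₁,ξ₃⟩⟨ξ₂,ξ₄⟩⟨η₁,η₄⟩⟨η₂,η₃⟩ + tv⟨ξ₁,ξ₄⟩⟨ξ₂,ξ₃⟩⟨η₁,η₃⟩⟨η₂,η₄⟩ + tw⟨ξ₁,ξ₄⟩⟨ξ₂,ξ₃⟩⟨η₁,η₄⟩⟨η₂,η₃⟩, where G_i = G_{ξ_i⊗η_i}. -/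
import Mathlib


open scoped RealInnerProductSpace

noncomputable section

variable {H K : Type*} [NormedAddCommGroup H] [InnerProductSpace ℝ H]
  [NormedAddCommGroup K] [InnerProductSpace ℝ K]

/-- The algebraic full Fock space, modelled as the free module on finite sequences of
vectors. -/
abbrev FockModel (H : Type*) := List H →₀ ℝ

/-- The diagonal Fock space over a pair of Hilbert spaces. -/
abbrev DiagFock (H K : Type*) := (List H × List K) →₀ ℝ

/-- The creation operator `a*(ξ)`. -/
def creOp (ξ : H) : FockModel H →ₗ[ℝ] FockModel H :=
  Finsupp.lmapDomain ℝ ℝ (fun l => ξ :: l)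

/-- The `(q,t)`-annihilation operator. -/
def annOp (q t : ℝ) (ξ : H) : FockModel H →ₗ[ℝ] FockModel H :=
  Finsupp.linearCombination ℝ (fun l : List H =>
    ∑ i ∈ Finset.range l.length,
      (q ^ i * t ^ (l.length - 1 - i) * ⟪ξ, l.getD i 0⟫) • Finsupp.single (l.eraseIdx i) (1 : ℝ))

/-- The tensor product `S ⊗_S T` of operators, acting on the diagonal Fock space. -/
def tensOp (S : FockModel H →ₗ[ℝ] FockModel H) (T : FockModel K →ₗ[ℝ] FockModel K) :
    DiagFock H K →ₗ[ℝ] DiagFock H K :=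
  Finsupp.linearCombination ℝ (fun p : List H × List K =>
    (S (Finsupp.single p.1 1)).sum fun l a =>
      (T (Finsupp.single p.2 1)).sum fun m b => (a * b) • Finsupp.single (l, m) (1 : ℝ))

/-- The quadrabasic Gaussian operator `G_{ξ⊗η} = A_{ξ⊗η} + A*_{ξ⊗η}`. -/
def gaussOp (q t v w : ℝ) (ξ : H) (η : K) : DiagFock H K →ₗ[ℝ] DiagFock H K :=
  tensOp (annOp q t ξ) (annOp v w η) + tensOp (creOp ξ) (creOp η)

/-- The vacuum vector `Ω ⊗ Ω̄`. -/
def vac : DiagFock H K := Finsupp.single ([], []) 1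

set_option linter.unusedSectionVars false

lemma annOp_nil (q t : ℝ) (ξ : H) : annOp q t ξ (Finsupp.single [] 1) = 0 := by
  simp [annOp]

lemma annOp_one (q t : ℝ) (ξ x : H) :
    annOp q t ξ (Finsupp.single [x] 1) = Finsupp.single [] ⟪ξ, x⟫ := by
  simp [annOp, ← Finsupp.single_mul]

lemma annOp_two (q t : ℝ) (ξ x y : H) :
    annOp q t ξ (Finsupp.single [x, y] 1) =
      Finsupp.single [y] (t * ⟪ξ, x⟫) + Finsupp.single [x] (q * ⟪ξ, y⟫) := by
  simp [annOp, Finset.sum_range_succ, ← Finsupp.single_mul]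

lemma annOp_three (q t : ℝ) (ξ x y z : H) :
    annOp q t ξ (Finsupp.single [x, y, z] 1) =
      Finsupp.single [y, z] (t ^ 2 * ⟪ξ, x⟫) + Finsupp.single [x, z] (q * t * ⟪ξ, y⟫) +
        Finsupp.single [x, y] (q ^ 2 * ⟪ξ, z⟫) := by
  simp [annOp, Finset.sum_range_succ, ← Finsupp.single_mul]

lemma creOp_single (ξ : H) (l : List H) (c : ℝ) :
    creOp ξ (Finsupp.single l c) = Finsupp.single (ξ :: l) c := by
  simp [creOp, Finsupp.mapDomain_single]

lemma tensOp_single (S : FockModel H →ₗ[ℝ] FockModel H) (T : FockModel K →ₗ[ℝ] FockModel K)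
    (l : List H) (m : List K) :
    tensOp S T (Finsupp.single (l, m) 1) =
      (S (Finsupp.single l 1)).sum fun l' a =>
        (T (Finsupp.single m 1)).sum fun m' b => (a * b) • Finsupp.single (l', m') 1 := by
  simp [tensOp]

lemma sum_two_singles {α N : Type*} [AddCommMonoid N] (a b : α) (x y : ℝ) (g : α → ℝ → N)
    (h0 : ∀ a, g a 0 = 0) (hadd : ∀ a x y, g a (x + y) = g a x + g a y) :
    (Finsupp.single a x + Finsupp.single b y).sum g = g a x + g b y := by
  classical
  rw [Finsupp.sum_add_index' h0 hadd, Finsupp.sum_single_index (h0 a),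
    Finsupp.sum_single_index (h0 b)]

lemma sum_three_singles {α N : Type*} [AddCommMonoid N] (a b c : α) (x y z : ℝ)
    (g : α → ℝ → N) (h0 : ∀ a, g a 0 = 0) (hadd : ∀ a x y, g a (x + y) = g a x + g a y) :
    (Finsupp.single a x + Finsupp.single b y + Finsupp.single c z).sum g
      = g a x + g b y + g c z := by
  classical
  rw [Finsupp.sum_add_index' h0 hadd, sum_two_singles a b x y g h0 hadd,
    Finsupp.sum_single_index (h0 c)]

lemma gauss_vac (q t v w : ℝ) (ξ : H) (η : K) :
    gaussOp q t v w ξ η (vac (H := H) (K := K)) = Finsupp.single ([ξ], [η]) 1 := by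
  simp [gaussOp, vac, tensOp_single, annOp_nil, creOp_single, Finsupp.sum_single_index,
    ← Finsupp.single_mul]

lemma gauss_one (q t v w : ℝ) (ξ a : H) (η b : K) :
    gaussOp q t v w ξ η (Finsupp.single ([a], [b]) 1) =
      Finsupp.single ([], []) (⟪ξ, a⟫ * ⟪η, b⟫) + Finsupp.single ([ξ, a], [η, b]) 1 := by
  simp [gaussOp, tensOp_single, annOp_one, creOp_single, Finsupp.sum_single_index,
    ← Finsupp.single_mul]

lemma gauss_two (q t v w : ℝ) (ξ a b : H) (η c d : K) :
    gaussOp q t v w ξ η (Finsupp.single ([a, b], [c, d]) 1) =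
      Finsupp.single ([b], [d]) ((t * ⟪ξ, a⟫) * (w * ⟪η, c⟫)) +
      Finsupp.single ([b], [c]) ((t * ⟪ξ, a⟫) * (v * ⟪η, d⟫)) +
      Finsupp.single ([a], [d]) ((q * ⟪ξ, b⟫) * (w * ⟪η, c⟫)) +
      Finsupp.single ([a], [c]) ((q * ⟪ξ, b⟫) * (v * ⟪η, d⟫)) +
      Finsupp.single ([ξ, a, b], [η, c, d]) 1 := by
  rw [gaussOp]
  simp only [LinearMap.add_apply, tensOp_single, annOp_two, creOp_single]
  rw [sum_two_singles _ _ _ _ _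
    (by intro l'; simp [Finsupp.sum])
    (by intro l' x y; simp only [Finsupp.sum]; rw [← Finset.sum_add_distrib]
        exact Finset.sum_congr rfl fun r _ => by rw [add_mul, add_smul])]
  rw [sum_two_singles _ _ _ _ _ (by intro m'; simp) (by intro m' x y; rw [mul_add, add_smul]),
     sum_two_singles _ _ _ _ _ (by intro m'; simp) (by intro m' x y; rw [mul_add, add_smul])]
  rw [Finsupp.sum_single_index (by simp), Finsupp.sum_single_index (by simp)]
  simp only [smul_smul, ← Finsupp.single_mul, mul_one, one_mul, smul_eq_mul]
  rw [show ∀ r : ℝ, r • Finsupp.single (([b],[d]) : List H × List K) (1:ℝ)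
      = Finsupp.single ([b],[d]) r from fun r => by simp] 
  simp only [Finsupp.smul_single, smul_eq_mul, mul_one]
  abel

lemma gauss_eval00_one (q t v w : ℝ) (ξ a : H) (η b : K) (c : ℝ) :
    (gaussOp q t v w ξ η (Finsupp.single ([a], [b]) c)) ([], []) = c * (⟪ξ, a⟫ * ⟪η, b⟫) := by
  classical
  have h : Finsupp.single (([a], [b]) : List H × List K) c
      = c • Finsupp.single ([a], [b]) 1 := by simp
  rw [h, map_smul, Finsupp.smul_apply, gauss_one]
  rw [Finsupp.add_apply, Finsupp.single_apply, Finsupp.single_apply]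
  simp

lemma gauss_eval00_three (q t v w : ℝ) (ξ a b c : H) (η d e f : K) :
    (gaussOp q t v w ξ η (Finsupp.single ([a, b, c], [d, e, f]) 1)) ([], []) = 0 := by
  classical
  rw [gaussOp]
  simp only [LinearMap.add_apply, tensOp_single, annOp_three, creOp_single]
  rw [sum_three_singles _ _ _ _ _ _ _
    (by intro l'; simp [Finsupp.sum])
    (by intro l' x y; simp only [Finsupp.sum]; rw [← Finset.sum_add_distrib]
        exact Finset.sum_congr rfl fun r _ => by rw [add_mul, add_smul])]
  rw [Finsupp.sum_single_index (by simp [Finsupp.sum])]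
  rw [sum_three_singles _ _ _ _ _ _ _ (by intro m'; simp)
        (fun m' x y => by rw [mul_add, add_smul]),
      sum_three_singles _ _ _ _ _ _ _ (by intro m'; simp)
        (fun m' x y => by rw [mul_add, add_smul]),
      sum_three_singles _ _ _ _ _ _ _ (by intro m'; simp)
        (fun m' x y => by rw [mul_add, add_smul]),
      Finsupp.sum_single_index (by simp)]
  simp [Finsupp.single_apply]


/-- The fourth mixed moment of quadrabasic Gaussian operators in the vacuum state:
`φ(G₁G₂G₃G₄) = ⟨ξ₁,ξ₂⟩⟨ξ₃,ξ₄⟩⟨η₁,η₂⟩⟨η₃,η₄⟩ + qv⟨ξ₁,ξ₃⟩⟨ξ₂,ξ₄⟩⟨η₁,η₃⟩⟨η₂,η₄⟩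
  + qw⟨ξ₁,ξ₃⟩⟨ξ₂,ξ₄⟩⟨η₁,η₄⟩⟨η₂,η₃⟩ + tv⟨ξ₁,ξ₄⟩⟨ξ₂,ξ₃⟩⟨η₁,η₃⟩⟨η₂,η₄⟩
  + tw⟨ξ₁,ξ₄⟩⟨ξ₂,ξ₃⟩⟨η₁,η₄⟩⟨η₂,η₃⟩`, where `φ(X) = ⟨Ω⊗Ω̄, X Ω⊗Ω̄⟩` is read off as the
coefficient of the vacuum in `X(Ω⊗Ω̄)`. -/
theorem quadrabasic_fourth_moment (q t v w : ℝ)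
    (ξ₁ ξ₂ ξ₃ ξ₄ : H) (η₁ η₂ η₃ η₄ : K) :
    (gaussOp q t v w ξ₁ η₁ (gaussOp q t v w ξ₂ η₂ (gaussOp q t v w ξ₃ η₃
        (gaussOp q t v w ξ₄ η₄ (vac (H := H) (K := K)))))) ([], []) =
      ⟪ξ₁, ξ₂⟫ * ⟪ξ₃, ξ₄⟫ * ⟪η₁, η₂⟫ * ⟪η₃, η₄⟫ +
      q * v * (⟪ξ₁, ξ₃⟫ * ⟪ξ₂, ξ₄⟫ * ⟪η₁, η₃⟫ * ⟪η₂, η₄⟫) +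
      q * w * (⟪ξ₁, ξ₃⟫ * ⟪ξ₂, ξ₄⟫ * ⟪η₁, η₄⟫ * ⟪η₂, η₃⟫) +
      t * v * (⟪ξ₁, ξ₄⟫ * ⟪ξ₂, ξ₃⟫ * ⟪η₁, η₃⟫ * ⟪η₂, η₄⟫) +
      t * w * (⟪ξ₁, ξ₄⟫ * ⟪ξ₂, ξ₃⟫ * ⟪η₁, η₄⟫ * ⟪η₂, η₃⟫) := by
  rw [gauss_vac, gauss_one, map_add, map_add, Finsupp.add_apply]
  have hA : gaussOp q t v w ξ₂ η₂
      (Finsupp.single (([], []) : List H × List K) (⟪ξ₃, ξ₄⟫ * ⟪η₃, η₄⟫)) =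
      (⟪ξ₃, ξ₄⟫ * ⟪η₃, η₄⟫) • Finsupp.single ([ξ₂], [η₂]) 1 := by
    rw [show Finsupp.single (([], []) : List H × List K) (⟪ξ₃, ξ₄⟫ * ⟪η₃, η₄⟫)
        = (⟪ξ₃, ξ₄⟫ * ⟪η₃, η₄⟫) • vac (H := H) (K := K) from by simp [vac],
      map_smul, gauss_vac]
  rw [hA, map_smul, Finsupp.smul_apply, gauss_eval00_one q t v w ξ₁ ξ₂ η₁ η₂ 1, gauss_two]
  simp only [map_add, Finsupp.add_apply, gauss_eval00_one, gauss_eval00_three, smul_eq_mul]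
  ring

end
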